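/- arXiv:1110.2635 — 5 statements merged into one kernel-verified Lean document; each statement's English description precedes it below -/
import Mathlib

section
/- Let T be a tree without vertices of degree 1 and d* : V(T) → ℕ a codistance function (i.e. if d*(v) = n and v' is adjacent to v then d*(v') ∈ {n-1, n+1}, and if n > 0 there is a unique neighbour v' of v with d*(v') = n+1). Then the set of vertices v with d*(v) = 0 is nonempty implies: for every vertex v and every k ≤ d*(v), there exists a vertex w at graph distance d*(v) - k from v with d*(w) = k. -/
/-
Away from the zero set a codistance has exactly one neighbour going up, so a vertex with at
least two neighbours also has one going down. Descending `d v - k` times from `v` reaches a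
vertex `w` with `d w = k` along a walk of length `d v - k`; since `d` is 1-Lipschitz for the
graph distance, no shorter walk joins `v` and `w`.
-/

open SimpleGraph

/-- A codistance on a graph: values of neighbours differ by exactly 1, and any vertex of
positive value has a unique neighbour of larger value. -/
def IsCodistance {V : Type*} (G : SimpleGraph V) (d : V → ℕ) : Prop :=
  (∀ v v' : V, G.Adj v v' → d v' = d v + 1 ∨ d v' + 1 = d v) ∧
  (∀ v : V, 0 < d v → ∃! v' : V, G.Adj v v' ∧ d v' = d v + 1)

namespace SimpleGraph

variable {V : Type*} {G : SimpleGraph V} {d : V → ℕ}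

theorem le_add_length_of_forall_adj_le (h : ∀ v w, G.Adj v w → d v ≤ d w + 1)
    {a b : V} (p : G.Walk a b) : d a ≤ d b + p.length := by
  induction p with
  | nil => simp
  | cons hadj _ ih =>
    have := h _ _ hadj
    rw [Walk.length_cons]
    omega

theorem le_add_dist_of_forall_adj_le (h : ∀ v w, G.Adj v w → d v ≤ d w + 1)
    {a b : V} (hab : G.Reachable a b) : d a ≤ d b + G.dist a b := by
  obtain ⟨p, hp⟩ := hab.exists_walk_length_eq_dist
  simpa [hp] using le_add_length_of_forall_adj_le h p

end SimpleGraph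

namespace IsCodistance

variable {V : Type*} {G : SimpleGraph V} {d : V → ℕ}

theorem le_succ_of_adj (hd : IsCodistance G d) {v w : V} (hvw : G.Adj v w) :
    d v ≤ d w + 1 := by
  rcases hd.1 v w hvw with h | h <;> omega

theorem exists_adj_succ_eq (hd : IsCodistance G d) {v : V}
    (hv : ∃ w w', w ≠ w' ∧ G.Adj v w ∧ G.Adj v w') (hpos : 0 < d v) :
    ∃ u, G.Adj v u ∧ d u + 1 = d v := by
  obtain ⟨up, -, huniq⟩ := hd.2 v hpos
  obtain ⟨w, w', hne, hw, hw'⟩ := hv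
  have down_of_ne_up : ∀ u, G.Adj v u → u ≠ up → d u + 1 = d v := fun u hu hne =>
    (hd.1 v u hu).resolve_left fun hup => hne (huniq u ⟨hu, hup⟩)
  by_cases hwup : w = up
  · exact ⟨w', hw', down_of_ne_up w' hw' (hwup ▸ hne.symm)⟩
  · exact ⟨w, hw, down_of_ne_up w hw hwup⟩

theorem exists_walk_descending (hd : IsCodistance G d)
    (hdeg : ∀ v : V, ∃ w w', w ≠ w' ∧ G.Adj v w ∧ G.Adj v w') (m : ℕ) :
    ∀ v, m ≤ d v → ∃ (w : V) (p : G.Walk v w), p.length = m ∧ d w + m = d v := by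
  induction m with
  | zero => exact fun v _ => ⟨v, .nil, rfl, rfl⟩
  | succ m ih =>
    intro v hm
    obtain ⟨u, hvu, hu⟩ := hd.exists_adj_succ_eq (hdeg v) (by omega)
    obtain ⟨w, p, hp, hw⟩ := ih u (by omega)
    exact ⟨w, .cons hvu p, by rw [Walk.length_cons, hp], by omega⟩

end IsCodistance

theorem stmt0_general {V : Type*} (G : SimpleGraph V)
    (hdeg : ∀ v : V, ∃ w w' : V, w ≠ w' ∧ G.Adj v w ∧ G.Adj v w')
    (d : V → ℕ) (hd : IsCodistance G d) :
    ∀ v : V, ∀ k ≤ d v, ∃ w : V, G.dist v w = d v - k ∧ d w = k := by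
  intro v k hk
  obtain ⟨w, p, hp, hw⟩ := hd.exists_walk_descending hdeg (d v - k) v (Nat.sub_le _ _)
  have hupper : G.dist v w ≤ d v - k := hp ▸ G.dist_le p
  have hlower : d v ≤ d w + G.dist v w :=
    le_add_dist_of_forall_adj_le (fun _ _ => hd.le_succ_of_adj) p.reachable
  exact ⟨w, by omega, by omega⟩

theorem stmt0 {V : Type*} (G : SimpleGraph V) (hT : G.IsTree)
    (hdeg : ∀ v : V, ∃ w w' : V, w ≠ w' ∧ G.Adj v w ∧ G.Adj v w')
    (d : V → ℕ) (hd : IsCodistance G d)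
    (h0 : ∃ v : V, d v = 0) :
    ∀ v : V, ∀ k ≤ d v, ∃ w : V, G.dist v w = d v - k ∧ d w = k :=
  stmt0_general G hdeg d hd
end

section
/- Suppose (A, d*) ∈ K_n and (A ∪ {y}, d*) ∈ K_n, where y is a single new vertex adjacent to a unique vertex x_k of A_k. Then A ∪ {y} is an elementary good extension of A: either (type 1) for every tuple x̄ ∈ ∏ A_i with k-th coordinate x_k, the value at the tuple with y substituted is |d*(x̄) − 1|; or (type 2) there is a tuple x̄ containing x_k at which d* is locally maximal, such that the value with y substituted for x_k is d*(z̄) + 1 exactly for the tuples z̄ (with k-th coordinate x_k) that are geodesic with x̄, and |d*(z̄) − 1| otherwise. -/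
open SimpleGraph

/-- The class `K_n`: `n`-tuples of nonempty finite trees with a codistance function
`d : ∏ A_i → ℕ` satisfying axioms (1)-(4) of the paper. -/
def InK (n : ℕ) (V : Fin n → Type) (G : ∀ i, SimpleGraph (V i))
    (d : (∀ i, V i) → ℕ) : Prop :=
  (∀ i, Finite (V i)) ∧ (∀ i, (G i).IsTree) ∧
  -- (1) some tuple has codistance 0
  (∃ x : ∀ i, V i, d x = 0) ∧
  -- (2) changing one coordinate to a neighbour changes d by exactly ±1
  (∀ (x : ∀ i, V i) (i : Fin n) (y : V i), (G i).Adj (x i) y →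
    d (Function.update x i y) = d x + 1 ∨ d (Function.update x i y) + 1 = d x) ∧
  -- (3) at most one increasing neighbour per coordinate at positive values
  (∀ (x : ∀ i, V i) (i : Fin n), 0 < d x →
    ∀ y z : V i, (G i).Adj (x i) y → (G i).Adj (x i) z →
      d (Function.update x i y) = d x + 1 → d (Function.update x i z) = d x + 1 → y = z) ∧
  -- (4) two increasing neighbours in distinct coordinates combine to +2
  (∀ (x : ∀ i, V i) (i j : Fin n), i ≠ j →
    ∀ (yi : V i) (yj : V j), (G i).Adj (x i) yi → (G j).Adj (x j) yj →
      d (Function.update x i yi) = d x + 1 → d (Function.update x j yj) = d x + 1 →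
      d (Function.update (Function.update x i yi) j yj) = d x + 2)

/-- `ȳ` is geodesic with `x̄`: `d(ȳ) = d(x̄) − Σ_j dist(x_j, y_j)`. -/
def Geodesic {n : ℕ} {V : Fin n → Type} (G : ∀ i, SimpleGraph (V i))
    (d : (∀ i, V i) → ℕ) (x y : ∀ i, V i) : Prop :=
  d y + ∑ i, (G i).dist (x i) (y i) = d x

/-- `a` lies on the geodesic path from `u` to `w` in a tree. -/
def OnPath {V : Type} (G : SimpleGraph V) (u a w : V) : Prop :=
  G.dist u a + G.dist a w = G.dist u w

/-!
Fix the slice of tuples whose `k`-th coordinate is `x_k` and compare `d` with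
`e(z̄) = d(z̄[k := y])` on it. Axioms (2) and (4) force "`y` raises `d`" to propagate along
every move inside the slice, so either it never happens at a positive value (type 1), or
`e = d + 1` on the whole slice. In the latter case `e` satisfies axioms (2)-(4) on the slice
and is positive there, so axiom (3) applies to `e` everywhere. This shows that from a
maximiser `x̄` of `d` every step of a geodesic walk in the slice lowers `d` by one, so every
slice tuple is geodesic with `x̄` (type 2).
-/

open Function

lemma SimpleGraph.Connected.exists_adj_dist_add_one {W : Type*} {H : SimpleGraph W}
    (hH : H.Connected) {a b : W} (hab : a ≠ b) :
    ∃ w, H.Adj b w ∧ H.dist a w + 1 = H.dist a b := by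
  obtain ⟨p, hp⟩ := hH.exists_walk_length_eq_dist b a
  cases p with
  | nil => exact absurd rfl hab
  | @cons _ w _ hbw q =>
    refine ⟨w, hbw, le_antisymm ?_ ?_⟩
    · have := dist_le q
      rw [Walk.length_cons] at hp
      rw [dist_comm, dist_comm (v := b)]
      omega
    · have := hH.dist_triangle (u := a) (v := w) (w := b)
      rw [dist_comm (u := w), dist_eq_one_iff_adj.2 hbw] at this
      exact this

section Codistance

variable {n : ℕ} {V : Fin n → Type} {G : ∀ i, SimpleGraph (V i)}

noncomputable def sumDist (G : ∀ i, SimpleGraph (V i)) (x z : ∀ i, V i) : ℕ :=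
  ∑ i, (G i).dist (x i) (z i)

@[simp]
lemma sumDist_self (x : ∀ i, V i) : sumDist G x x = 0 := by
  simp [sumDist]

lemma sumDist_update_add (x z : ∀ i, V i) (i : Fin n) (w : V i) :
    sumDist G x (update z i w) + (G i).dist (x i) (z i) =
      sumDist G x z + (G i).dist (x i) w := by
  simp only [sumDist, ← Finset.add_sum_erase _ _ (Finset.mem_univ i), update_self]
  rw [Finset.sum_congr rfl fun j hj => by rw [update_of_ne (Finset.ne_of_mem_erase hj)]]
  ring

lemma exists_adj_sumDist_update_add_one (hconn : ∀ i, (G i).Connected) {x z : ∀ i, V i}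
    (hzx : z ≠ x) :
    ∃ i w, z i ≠ x i ∧ (G i).Adj (z i) w ∧ (G i).dist (x i) w + 1 = (G i).dist (x i) (z i) ∧
      sumDist G x (update z i w) + 1 = sumDist G x z := by
  obtain ⟨i, hi⟩ := Function.ne_iff.1 hzx
  obtain ⟨w, hw, hdist⟩ := (hconn i).exists_adj_dist_add_one (Ne.symm hi)
  have := sumDist_update_add (G := G) x z i w
  exact ⟨i, w, hi, hw, hdist, by omega⟩

lemma slice_induction (hconn : ∀ i, (G i).Connected) {k : Fin n} {x : ∀ i, V i}
    {p : (∀ i, V i) → Prop}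
    (hstep : ∀ z, z k = x k → ∀ i w, i ≠ k → (G i).Adj (z i) w → p z → p (update z i w))
    (hx : p x) : ∀ z, z k = x k → p z := by
  intro z hz
  induction hs : sumDist G x z using Nat.strong_induction_on generalizing z with
  | _ s IH =>
  by_cases hzx : z = x
  · exact hzx ▸ hx
  obtain ⟨i, w, hne, hw, -, hsum⟩ := exists_adj_sumDist_update_add_one hconn hzx
  have hik : i ≠ k := by rintro rfl; exact hne hz
  have hz' : update z i w k = x k := by rw [update_of_ne hik.symm, hz]
  have := hstep _ hz' i (z i) hik (by simpa using hw.symm) (IH _ (by omega) _ hz' rfl)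
  simpa using this

structure IsCodistanceOn (G : ∀ i, SimpleGraph (V i)) (d : (∀ i, V i) → ℕ) (S : Set (Fin n)) :
    Prop where
  step : ∀ x, ∀ i ∈ S, ∀ a, (G i).Adj (x i) a →
    d (update x i a) = d x + 1 ∨ d (update x i a) + 1 = d x
  up_unique : ∀ x, ∀ i ∈ S, 0 < d x → ∀ a b, (G i).Adj (x i) a → (G i).Adj (x i) b →
    d (update x i a) = d x + 1 → d (update x i b) = d x + 1 → a = b
  up_up : ∀ x, ∀ i ∈ S, ∀ j ∈ S, i ≠ j → ∀ (a : V i) (b : V j),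
    (G i).Adj (x i) a → (G j).Adj (x j) b →
    d (update x i a) = d x + 1 → d (update x j b) = d x + 1 →
    d (update (update x i a) j b) = d x + 2

lemma InK.isCodistanceOn {d : (∀ i, V i) → ℕ} (h : InK n V G d) (S : Set (Fin n)) :
    IsCodistanceOn G d S where
  step x i _ := h.2.2.2.1 x i
  up_unique x i _ := h.2.2.2.2.1 x i
  up_up x i _ j _ := h.2.2.2.2.2 x i j

namespace IsCodistanceOn

variable {d : (∀ i, V i) → ℕ} {S : Set (Fin n)}

lemma comp_update (hd : IsCodistanceOn G d S) {k : Fin n} (hk : k ∉ S) (c : V k) :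
    IsCodistanceOn G (fun z => d (update z k c)) S where
  step x i hi a ha := by
    have hik : i ≠ k := ne_of_mem_of_not_mem hi hk
    simpa only [update_comm hik] using hd.step _ i hi a (by rwa [update_of_ne hik])
  up_unique x i hi hpos a b ha hb hua hub := by
    have hik : i ≠ k := ne_of_mem_of_not_mem hi hk
    simp only [update_comm hik] at hua hub
    exact hd.up_unique _ i hi hpos a b (by rwa [update_of_ne hik]) (by rwa [update_of_ne hik])
      hua hub
  up_up x i hi j hj hij a b ha hb hua hub := by
    have hik : i ≠ k := ne_of_mem_of_not_mem hi hk
    have hjk : j ≠ k := ne_of_mem_of_not_mem hj hk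
    simp only [update_comm hik, update_comm hjk] at hua hub ⊢
    exact hd.up_up _ i hi j hj hij a b (by rwa [update_of_ne hik]) (by rwa [update_of_ne hjk])
      hua hub

lemma natCast_update_eq_abs_sub_one (hd : IsCodistanceOn G d S) {x : ∀ i, V i} {i : Fin n}
    (hi : i ∈ S) {a : V i} (ha : (G i).Adj (x i) a) (h : d (update x i a) = d x + 1 → d x = 0) :
    (d (update x i a) : ℤ) = |(d x : ℤ) - 1| := by
  rcases Nat.eq_zero_or_pos (d x) with h0 | hpos
  · rcases hd.step x i hi a ha with hup | hdown <;> simp_all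
  · rcases hd.step x i hi a ha with hup | hdown
    · omega
    · rw [abs_of_nonneg (by omega)]
      omega

lemma update_le_of_update_succ (hd : IsCodistanceOn G d S) {x : ∀ i, V i} {i : Fin n}
    (hi : i ∈ S) (hpos : 0 < d x) {a b : V i} (ha : (G i).Adj (x i) a) (hb : (G i).Adj (x i) b)
    (hub : d (update x i b) = d x + 1) (hab : a ≠ b) : d (update x i a) ≤ d x := by
  rcases hd.step x i hi a ha with hua | hda
  · exact absurd (hd.up_unique x i hi hpos a b ha hb hua hub) hab
  · omega

lemma update_succ_of_update_succ (hd : IsCodistanceOn G d S) {i k : Fin n} (hi : i ∈ S)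
    (hk : k ∈ S) (hik : i ≠ k) {z : ∀ i, V i} {a : V k} {b : V i} (ha : (G k).Adj (z k) a)
    (hb : (G i).Adj (z i) b) (hua : d (update z k a) = d z + 1) :
    d (update (update z i b) k a) = d (update z i b) + 1 := by
  rcases hd.step z i hi b hb with hub | hdb
  · have := hd.up_up z k hk i hi hik.symm a b ha hb hua hub
    rw [update_comm hik.symm] at this
    omega
  · have h1 := hd.step (update z k a) i hi b (by rwa [update_of_ne hik])
    have h2 := hd.step (update z i b) k hk a (by rwa [update_of_ne hik.symm])
    rw [update_comm hik.symm] at h1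
    omega

lemma add_sumDist_eq_of_max_on_slice {f : (∀ i, V i) → ℕ} {k : Fin n}
    (hf : IsCodistanceOn G f {k}ᶜ) (hconn : ∀ i, (G i).Connected) {x : ∀ i, V i}
    (hpos : ∀ z, z k = x k → 0 < f z) (hmax : ∀ z, z k = x k → f z ≤ f x) :
    ∀ z, z k = x k → f z + sumDist G x z = f x := by
  intro z hz
  induction hs : sumDist G x z using Nat.strong_induction_on generalizing z with
  | _ s IH =>
  by_cases hzx : z = x
  · subst hzx; rw [sumDist_self] at hs; omega
  obtain ⟨i, w, hne, hw, hdist, hsum⟩ := exists_adj_sumDist_update_add_one hconn hzx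
  have hik : i ≠ k := by rintro rfl; exact hne hz
  set z' := update z i w with hz'_def
  have hz' : z' k = x k := by rw [hz'_def, update_of_ne hik.symm, hz]
  have IH' := IH _ (by omega) z' hz' rfl
  have hzz : update z' i (z i) = z := by simp [z']
  have hw' : (G i).Adj (z' i) (z i) := by simpa [z'] using hw.symm
  have hstep := hf.step z' i hik (z i) hw'
  rw [hzz] at hstep
  suffices f z ≠ f z' + 1 by omega
  intro hup
  by_cases hz'x : z' = x
  · have := hmax z hz; rw [hz'x] at hup; omega
  -- a step from `z'` towards `x` also raises `f`
  obtain ⟨j, v, hne', hv, hdist', hsum'⟩ := exists_adj_sumDist_update_add_one hconn hz'x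
  have hjk : j ≠ k := by rintro rfl; exact hne' hz'
  have hz'' : update z' j v k = x k := by rw [update_of_ne hjk.symm, hz']
  have IH'' := IH _ (by omega) _ hz'' rfl
  rcases eq_or_ne j i with rfl | hji
  · -- so `z j` and `v` are two raising neighbours, at different distances from `x j`
    have := hf.up_unique z' j hik (hpos z' hz') (z j) v hw' hv (by rw [hzz]; omega) (by omega)
    simp only [z', update_self] at hdist'
    rw [← this] at hdist'
    omega
  · -- so `z[j := v]` would be two above `z'` although it is as close to `x`
    have hup2 := hf.up_up z' i hik j hjk hji.symm (z i) v hw' hv (by rw [hzz]; omega) (by omega)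
    rw [hzz] at hup2
    have hzj : z' j = z j := update_of_ne hji w z
    have hu : update z j v k = x k := by rw [update_of_ne hjk.symm, hz]
    have hsumu := sumDist_update_add (G := G) x z j v
    rw [← hzj] at hsumu
    have := IH _ (by omega) _ hu rfl
    omega

lemma update_succ_on_slice (hd : IsCodistanceOn G d Set.univ) (hconn : ∀ i, (G i).Connected)
    {k : Fin n} {x : ∀ i, V i} {c : V k} (hc : (G k).Adj (x k) c)
    (hx : d (update x k c) = d x + 1) : ∀ z, z k = x k → d (update z k c) = d z + 1 :=
  slice_induction hconn (fun _ hz _ _ hik hw h =>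
    hd.update_succ_of_update_succ trivial trivial hik (hz ▸ hc) hw h) hx

lemma geodesic_of_max_on_slice {k : Fin n} (hd : IsCodistanceOn G d {k}ᶜ)
    (hconn : ∀ i, (G i).Connected) {x : ∀ i, V i} {c : V k} (hup : ∀ z, z k = x k → d (update z k c) = d z + 1)
    (hmax : ∀ z, z k = x k → d z ≤ d x) : ∀ z, z k = x k → Geodesic G d x z := by
  intro z hz
  have := (hd.comp_update (by simp) c).add_sumDist_eq_of_max_on_slice hconn
    (fun z hz => by simp [hup z hz]) (fun z hz => by simpa [hup z hz, hup x rfl] using hmax z hz)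
    z hz
  simp only [hup z hz, hup x rfl] at this
  unfold Geodesic
  unfold sumDist at this
  omega

end IsCodistanceOn

end Codistance

theorem stmt6_general {n : ℕ} (V : Fin n → Type) (G : ∀ i, SimpleGraph (V i))
    (d : (∀ i, V i) → ℕ) (k : Fin n) (y xk : V k)
    (hleaf : ∀ z : V k, (G k).Adj y z ↔ z = xk)
    (P : ∀ i, Set (V i))
    (hP1 : ∀ i, i ≠ k → P i = Set.univ) (hP2 : P k = {y}ᶜ)
    (hB : InK n V G d) :
    -- type 1
    (∀ x : ∀ i, V i, (∀ j, x j ∈ P j) → x k = xk →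
      (d (Function.update x k y) : ℤ) = |(d x : ℤ) - 1|) ∨
    -- type 2
    (∃ x : ∀ i, V i, (∀ j, x j ∈ P j) ∧ x k = xk ∧
      (∀ (i : Fin n) (z : V i), (G i).Adj (x i) z →
        (∀ j, Function.update x i z j ∈ P j) → d (Function.update x i z) ≤ d x) ∧
      (∀ z : ∀ i, V i, (∀ j, z j ∈ P j) → z k = xk →
        (Geodesic G d x z → d (Function.update z k y) = d z + 1) ∧
        (¬ Geodesic G d x z → (d (Function.update z k y) : ℤ) = |(d z : ℤ) - 1|))) := by
  have hd := hB.isCodistanceOn Set.univ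
  have hconn : ∀ i, (G i).Connected := fun i => (hB.2.1 i).connected
  have hxky : (G k).Adj xk y := ((hleaf xk).2 rfl).symm
  have hP : ∀ z : ∀ i, V i, z k = xk → ∀ j, z j ∈ P j := by
    intro z hz j
    rcases eq_or_ne j k with rfl | hj
    · simpa [hP2, hz] using hxky.ne
    · simp [hP1 j hj]
  by_cases hup : ∃ z₀ : ∀ i, V i, z₀ k = xk ∧ 0 < d z₀ ∧ d (update z₀ k y) = d z₀ + 1
  swap
  · exact Or.inl fun x _ hx => hd.natCast_update_eq_abs_sub_one trivial (hx ▸ hxky) fun h =>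
      Nat.eq_zero_of_not_pos fun h0 => hup ⟨x, hx, h0, h⟩
  obtain ⟨z₀, hz₀, hpos, hz₀up⟩ := hup
  have hslice_up z (hz : z k = xk) : d (update z k y) = d z + 1 :=
    hd.update_succ_on_slice hconn (hz₀ ▸ hxky) hz₀up z (hz.trans hz₀.symm)
  have : ∀ i, Finite (V i) := hB.1
  obtain ⟨xb, hxb : xb k = xk, hmax⟩ :=
    Set.exists_max_image {z : ∀ i, V i | z k = xk} d (Set.toFinite _) ⟨z₀, hz₀⟩
  have hgeo z (hz : z k = xk) : Geodesic G d xb z :=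
    (hB.isCodistanceOn {k}ᶜ).geodesic_of_max_on_slice hconn
      (fun z hz => hslice_up z (hz.trans hxb)) (fun z hz => hmax z (hz.trans hxb)) z
      (hz.trans hxb.symm)
  refine Or.inr ⟨xb, hP xb hxb, hxb, fun i a ha haP => ?_,
    fun z _ hz => ⟨fun _ => hslice_up z hz, fun h => absurd (hgeo z hz) h⟩⟩
  rcases eq_or_ne i k with rfl | hik
  · exact hd.update_le_of_update_succ trivial (hpos.trans_le (hmax z₀ hz₀)) ha (hxb ▸ hxky)
      (hslice_up xb hxb) (by simpa [hP2] using haP i)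
  · exact hmax _ (by show update xb i a k = xk; rw [update_of_ne hik.symm, hxb])

/-- Lemma (converse): if both `A` and `A ∪ {y}` are in `K_n`, where `y` is a leaf attached
to `x_k ∈ A_k`, then `A ∪ {y}` is an elementary good extension of `A` of type 1 or 2. -/
theorem stmt6 {n : ℕ} (V : Fin n → Type) (G : ∀ i, SimpleGraph (V i))
    (d : (∀ i, V i) → ℕ) (k : Fin n) (y xk : V k)
    (hleaf : ∀ z : V k, (G k).Adj y z ↔ z = xk)
    (P : ∀ i, Set (V i))
    (hP1 : ∀ i, i ≠ k → P i = Set.univ) (hP2 : P k = {y}ᶜ)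
    (hA : InK n (fun i => ↥(P i)) (fun i => (G i).induce (P i))
      (fun x => d (fun i => (x i : V i))))
    (hB : InK n V G d) :
    -- type 1
    (∀ x : ∀ i, V i, (∀ j, x j ∈ P j) → x k = xk →
      (d (Function.update x k y) : ℤ) = |(d x : ℤ) - 1|) ∨
    -- type 2
    (∃ x : ∀ i, V i, (∀ j, x j ∈ P j) ∧ x k = xk ∧
      (∀ (i : Fin n) (z : V i), (G i).Adj (x i) z →
        (∀ j, Function.update x i z j ∈ P j) → d (Function.update x i z) ≤ d x) ∧
      (∀ z : ∀ i, V i, (∀ j, z j ∈ P j) → z k = xk →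
        (Geodesic G d x z → d (Function.update z k y) = d z + 1) ∧
        (¬ Geodesic G d x z → (d (Function.update z k y) : ℤ) = |(d z : ℤ) - 1|))) :=
  stmt6_general V G d k y xk hleaf P hP1 hP2 hB
end

section
/- Suppose A ⊆ B are both in K_n with B finite. Then B arises from A by a finite sequence of elementary good extensions (each adding one new leaf vertex to one coordinate tree, with codistance values determined as in the type-1 or type-2 rules). -/
/-!
The coordinate trees of `A` are grown inside those of `B` one leaf at a time: a boundary edge
`x_k — y` of the subtree `A_k` gives the next leaf, adjacent to no other vertex of `A_k` since
`B_k` is a tree. The new codistances then always follow one of the two rules. Call a tuple `z̄`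
through `x_k` increasing if `d z̄ > 0` and moving `z_k` to `y` raises `d`. If there is none,
that move always gives `|d z̄ - 1|` (type 1). Otherwise an increasing `x̄` of largest codistance
is a local maximum of `d` on `A`, by axioms (3) and (4). As `d` is 1-Lipschitz for the sum of
the tree distances, moving to `y` raises `d` on every tuple geodesic with `x̄`; conversely, by
induction along steps towards `x̄` inside `A`, every increasing tuple is geodesic with `x̄`
(type 2).
-/

open SimpleGraph

/-- `Q` arises from `P` by one elementary good extension inside the ambient structure
`(V, G, d)`: a single new leaf `y` is added to coordinate `k`, adjacent (within `Q`) only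
to `xk ∈ P k`, with codistances given by the type-1 or type-2 rule. -/
def GoodStep {n : ℕ} {V : Fin n → Type} (G : ∀ i, SimpleGraph (V i))
    (d : (∀ i, V i) → ℕ) (P Q : ∀ i, Set (V i)) : Prop :=
  ∃ (k : Fin n) (y xk : V k), y ∉ P k ∧ xk ∈ P k ∧ (G k).Adj xk y ∧
    Q k = insert y (P k) ∧ (∀ i, i ≠ k → Q i = P i) ∧
    (∀ z ∈ Q k, (G k).Adj y z → z = xk) ∧
    -- type 1
    ((∀ x : ∀ i, V i, (∀ j, x j ∈ P j) → x k = xk →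
        (d (Function.update x k y) : ℤ) = |(d x : ℤ) - 1|) ∨
    -- type 2
     (∃ x : ∀ i, V i, (∀ j, x j ∈ P j) ∧ x k = xk ∧
        (∀ (i : Fin n) (z : V i), (G i).Adj (x i) z →
          (∀ j, Function.update x i z j ∈ P j) → d (Function.update x i z) ≤ d x) ∧
        (∀ z : ∀ i, V i, (∀ j, z j ∈ P j) → z k = xk →
          (Geodesic G d x z → d (Function.update z k y) = d z + 1) ∧
          (¬ Geodesic G d x z → (d (Function.update z k y) : ℤ) = |(d z : ℤ) - 1|))))

namespace SimpleGraph

variable {W : Type*} {G : SimpleGraph W}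

lemma Walk.dist_add_one_eq_of_length_eq_dist {a w b : W} (h : G.Adj a w) (q : G.Walk w b)
    (hq : (q.cons h).length = G.dist a b) : G.dist w b + 1 = G.dist a b := by
  have hle := dist_le q
  have htri := q.reachable.dist_triangle_right a
  rw [dist_eq_one_iff_adj.2 h] at htri
  rw [Walk.length_cons] at hq
  omega

lemma Connected.exists_adj_dist_add_one_eq (hG : G.Connected) {a b : W} (hab : a ≠ b) :
    ∃ w, G.Adj a w ∧ G.dist w b + 1 = G.dist a b := by
  obtain ⟨p, hp⟩ := hG.exists_walk_length_eq_dist a b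
  cases p with
  | nil => exact absurd rfl hab
  | cons h q => exact ⟨_, h, q.dist_add_one_eq_of_length_eq_dist h hp⟩

lemma exists_isPath_support_subset_of_connected_induce {S : Set W}
    (hS : (G.induce S).Connected) {a b : W} (ha : a ∈ S) (hb : b ∈ S) :
    ∃ p : G.Walk a b, p.IsPath ∧ ∀ v ∈ p.support, v ∈ S := by
  obtain ⟨q, hq, -⟩ := (hS ⟨a, ha⟩ ⟨b, hb⟩).exists_path_of_dist
  refine ⟨q.map (Embedding.induce S).toHom, hq.map Subtype.val_injective, fun v hv => ?_⟩
  have hv' : v ∈ (q.map (Embedding.induce S).toHom).support := hv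
  obtain ⟨u, -, rfl⟩ := List.mem_map.1 (Walk.support_map _ q ▸ hv')
  exact u.2

lemma IsTree.length_eq_dist_of_isPath (hG : G.IsTree) {a b : W} {p : G.Walk a b}
    (hp : p.IsPath) : p.length = G.dist a b := by
  obtain ⟨q, hq, hql⟩ := hG.connected.exists_path_of_dist a b
  rw [← hql]
  exact congrArg (fun r : G.Path a b => r.1.length)
    ((hG.isAcyclic.subsingleton_path a b).elim ⟨p, hp⟩ ⟨q, hq⟩)

lemma IsTree.exists_adj_mem_dist_add_one_eq (hG : G.IsTree) {S : Set W}
    (hS : (G.induce S).Connected) {a b : W} (ha : a ∈ S) (hb : b ∈ S) (hab : a ≠ b) :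
    ∃ w ∈ S, G.Adj a w ∧ G.dist w b + 1 = G.dist a b := by
  obtain ⟨p, hp, hpS⟩ := exists_isPath_support_subset_of_connected_induce hS ha hb
  cases p with
  | nil => exact absurd rfl hab
  | cons h q =>
    exact ⟨_, hpS _ (by simp), h,
      q.dist_add_one_eq_of_length_eq_dist h (hG.length_eq_dist_of_isPath hp)⟩

lemma IsAcyclic.eq_of_adj_of_notMem {S : Set W} (hG : G.IsAcyclic)
    (hS : (G.induce S).Connected) {y a b : W} (hy : y ∉ S) (ha : a ∈ S) (hb : b ∈ S)
    (hya : G.Adj y a) (hyb : G.Adj y b) : a = b := by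
  obtain ⟨p, hp, hpS⟩ := exists_isPath_support_subset_of_connected_induce hS ha hb
  have hyb_path : hyb.toWalk.IsPath := by simpa using hyb.ne
  have hya_path : (p.cons hya).IsPath := hp.cons fun h => hy (hpS y h)
  have := congrArg (fun r : G.Path y b => r.1.length)
    ((hG.subsingleton_path y b).elim ⟨_, hya_path⟩ ⟨_, hyb_path⟩)
  exact Walk.eq_of_length_eq_zero (p := p) (by simpa using this)

lemma connected_induce_insert {S : Set W} (hS : (G.induce S).Connected) {x y : W}
    (hx : x ∈ S) (hxy : G.Adj x y) : (G.induce (insert y S)).Connected := by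
  have hunion := induce_union_connected hS.preconnected
    (induce_pair_connected_of_adj hxy).preconnected ⟨x, hx, by simp⟩
  rwa [Set.union_insert, Set.union_singleton,
    Set.insert_eq_of_mem (Set.mem_insert_of_mem y hx)] at hunion

end SimpleGraph

open Function

section Codistance

variable {n : ℕ} {V : Fin n → Type} {G : ∀ i, SimpleGraph (V i)} {d : (∀ i, V i) → ℕ}
  {P : ∀ i, Set (V i)}

noncomputable def tupleDist (G : ∀ i, SimpleGraph (V i)) (x z : ∀ i, V i) : ℕ :=
  ∑ i, (G i).dist (x i) (z i)

lemma tupleDist_comm (x z : ∀ i, V i) : tupleDist G x z = tupleDist G z x := by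
  simp only [tupleDist, dist_comm]

lemma tupleDist_self (x : ∀ i, V i) : tupleDist G x x = 0 := by
  simp [tupleDist]

lemma tupleDist_update_add (x z : ∀ i, V i) (j : Fin n) (w : V j) :
    tupleDist G x (update z j w) + (G j).dist (x j) (z j) =
      tupleDist G x z + (G j).dist (x j) w := by
  unfold tupleDist
  rw [← Finset.add_sum_erase _ _ (Finset.mem_univ j),
    ← Finset.add_sum_erase _ _ (Finset.mem_univ j), update_self,
    Finset.sum_congr rfl fun i hi => by rw [update_of_ne (Finset.ne_of_mem_erase hi)]]
  ring

lemma tupleDist_update_update (x z : ∀ i, V i) (k : Fin n) (a : V k) (h : x k = z k) :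
    tupleDist G (update x k a) (update z k a) = tupleDist G x z := by
  refine Finset.sum_congr rfl fun i _ => ?_
  rcases eq_or_ne i k with rfl | hik
  · simp [h]
  · simp [update_of_ne hik]

lemma update_mem_of_mem {z : ∀ i, V i} (hz : ∀ i, z i ∈ P i) {j : Fin n}
    {w : V j} (hw : w ∈ P j) : ∀ i, update z j w i ∈ P i :=
  (forall_update_iff z fun i v => v ∈ P i).2 ⟨hw, fun i _ => hz i⟩

/-- Axiom (2) of `InK`. -/
def ChangesByOne (G : ∀ i, SimpleGraph (V i)) (d : (∀ i, V i) → ℕ) : Prop :=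
  ∀ (x : ∀ i, V i) (i : Fin n) (y : V i), (G i).Adj (x i) y →
    d (update x i y) = d x + 1 ∨ d (update x i y) + 1 = d x

namespace ChangesByOne

lemma le_add_tupleDist (hd : ChangesByOne G d) (hG : ∀ i, (G i).Connected)
    (x z : ∀ i, V i) : d z ≤ d x + tupleDist G x z := by
  induction hm : tupleDist G x z using Nat.strong_induction_on generalizing z with
  | _ m ih =>
  by_cases hxz : x = z
  · subst hxz; omega
  obtain ⟨j, hj⟩ := Function.ne_iff.1 hxz
  obtain ⟨w, hw, hwd⟩ := (hG j).exists_adj_dist_add_one_eq (Ne.symm hj)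
  rw [dist_comm, dist_comm (u := z j)] at hwd
  have hsum := tupleDist_update_add (G := G) x z j w
  have := ih _ (by omega) (update z j w) rfl
  rcases hd z j w hw with h | h <;> omega

lemma increases_of_decreases (hd : ChangesByOne G d) {z : ∀ i, V i} {i k : Fin n} (hik : i ≠ k)
    {w : V i} {y : V k} (hw : (G i).Adj (z i) w) (hy : (G k).Adj (z k) y)
    (hdown : d (update z i w) + 1 = d z) (hinc : d (update z k y) = d z + 1) :
    d (update (update z i w) k y) = d (update z i w) + 1 := by
  have hback := hd (update (update z i w) k y) i (z i)
    (by rw [update_of_ne hik, update_self]; exact hw.symm)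
  rw [update_comm (Ne.symm hik), update_idem, update_eq_self] at hback
  have := hd (update z i w) k y (by rwa [update_of_ne (Ne.symm hik)])
  omega

lemma increases_or_eq_abs_sub_one (hd : ChangesByOne G d) {z : ∀ i, V i} {k : Fin n} {y : V k}
    (hy : (G k).Adj (z k) y) :
    (0 < d z ∧ d (update z k y) = d z + 1) ∨ (d (update z k y) : ℤ) = |(d z : ℤ) - 1| := by
  rcases Nat.eq_zero_or_pos (d z) with h0 | hpos
  · right
    have h1 : d (update z k y) = 1 := by rcases hd z k y hy with h | h <;> omega
    simp [h0, h1]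
  · rcases hd z k y hy with h | h
    · exact Or.inl ⟨hpos, h⟩
    · right
      rw [← h]
      simp

end ChangesByOne

namespace Geodesic

variable {x z : ∀ i, V i}

lemma update_toward (hd : ChangesByOne G d) (hG : ∀ i, (G i).Connected)
    (hgeo : Geodesic G d x z) {j : Fin n} {w : V j} (hw : (G j).Adj (z j) w)
    (hwd : (G j).dist (x j) w + 1 = (G j).dist (x j) (z j)) :
    d (update z j w) = d z + 1 ∧ Geodesic G d x (update z j w) := by
  have hgeo' : d z + tupleDist G x z = d x := hgeo
  have hsum := tupleDist_update_add (G := G) x z j w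
  have hlip := hd.le_add_tupleDist hG (update z j w) x
  rw [tupleDist_comm] at hlip
  have hup : d (update z j w) = d z + 1 := by rcases hd z j w hw with h | h <;> omega
  exact ⟨hup, show d (update z j w) + tupleDist G x (update z j w) = d x by omega⟩

lemma update_increases (hd : ChangesByOne G d) (hG : ∀ i, (G i).Connected)
    (hgeo : Geodesic G d x z) {k : Fin n} {y : V k} (hxz : x k = z k) (hy : (G k).Adj (z k) y)
    (hx : d (update x k y) = d x + 1) : d (update z k y) = d z + 1 := by
  have hgeo' : d z + tupleDist G x z = d x := hgeo
  -- moving both tuples to `y` keeps their distance, so `d` is squeezed by the Lipschitz bound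
  have hlip := hd.le_add_tupleDist hG (update z k y) (update x k y)
  rw [tupleDist_update_update _ _ _ _ hxz.symm, tupleDist_comm] at hlip
  rcases hd z k y hy with h | h <;> omega

end Geodesic

lemma exists_coord_adj_mem_dist_add_one_eq (hT : ∀ i, (G i).IsTree)
    (hP : ∀ i, ((G i).induce (P i)).Connected) {x z : ∀ i, V i} (hx : ∀ i, x i ∈ P i)
    (hz : ∀ i, z i ∈ P i) (hxz : x ≠ z) :
    ∃ j, ∃ w ∈ P j,
      (G j).Adj (z j) w ∧ (G j).dist (x j) w + 1 = (G j).dist (x j) (z j) := by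
  obtain ⟨j, hj⟩ := Function.ne_iff.1 hxz
  obtain ⟨w, hwP, hw, hwd⟩ :=
    (hT j).exists_adj_mem_dist_add_one_eq (hP j) (hz j) (hx j) (Ne.symm hj)
  exact ⟨j, w, hwP, hw, by rwa [dist_comm, dist_comm (u := z j)] at hwd⟩

lemma ne_of_dist_add_one_eq {x t : ∀ i, V i} {k j : Fin n} (ht : t k = x k) {w : V j}
    (hwd : (G j).dist (x j) w + 1 = (G j).dist (x j) (t j)) : j ≠ k := by
  rintro rfl
  rw [ht, dist_self] at hwd
  omega

def IsLocalMaxIn (G : ∀ i, SimpleGraph (V i)) (d : (∀ i, V i) → ℕ) (P : ∀ i, Set (V i))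
    (x : ∀ i, V i) : Prop :=
  ∀ (i : Fin n) (z : V i), (G i).Adj (x i) z → (∀ j, update x i z j ∈ P j) →
    d (update x i z) ≤ d x

lemma IsLocalMaxIn.add_one_eq_of_geodesic (hB : InK n V G d)
    (hP : ∀ i, ((G i).induce (P i)).Connected) {x : ∀ i, V i} (hx : ∀ i, x i ∈ P i)
    (hmax : IsLocalMaxIn G d P x) {z : ∀ i, V i} (hz : ∀ i, z i ∈ P i)
    (hgeo : Geodesic G d x z) (hpos : 0 < d z) {i : Fin n} {w : V i} (hwP : w ∈ P i)
    (hw : (G i).Adj (z i) w) (hwd : (G i).dist (x i) (z i) + 1 = (G i).dist (x i) w) :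
    d (update z i w) + 1 = d z := by
  obtain ⟨-, hT, -, hd, huniq, hcomb⟩ := hB
  have hG i := (hT i).connected
  induction hm : tupleDist G x z using Nat.strong_induction_on generalizing z with
  | _ m ih =>
  by_contra hne
  have hup : d (update z i w) = d z + 1 := by rcases hd z i w hw with h | h <;> omega
  -- a step towards `x` also raises `d`: by (3) it is in another coordinate, and by (4) the
  -- away step still raises `d` after it, against the induction hypothesis
  by_cases hxz : x = z
  · subst hxz
    have := hmax i w hw (update_mem_of_mem hx hwP)
    omega
  obtain ⟨j, w', hw'P, hw', hw'd⟩ := exists_coord_adj_mem_dist_add_one_eq hT hP hx hz hxz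
  obtain ⟨hup', hgeo'⟩ := hgeo.update_toward hd hG hw' hw'd
  rcases eq_or_ne j i with rfl | hji
  · obtain rfl := huniq z j hpos w w' hw hw' hup hup'
    omega
  · have hcomb' := hcomb z i j (Ne.symm hji) w w' hw hw' hup hup'
    rw [update_comm (Ne.symm hji)] at hcomb'
    have hsum := tupleDist_update_add (G := G) x z j w'
    have := ih _ (by omega) (update_mem_of_mem hz hw'P) hgeo' (by omega)
      (by rwa [update_of_ne (Ne.symm hji)]) (by rwa [update_of_ne (Ne.symm hji)]) rfl
    omega

lemma isLocalMaxIn_of_maximal_increasing (hB : InK n V G d) {x : ∀ i, V i}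
    {k : Fin n} {y : V k} (hyP : y ∉ P k) (hy : (G k).Adj (x k) y) (hpos : 0 < d x)
    (hinc : d (update x k y) = d x + 1)
    (hle : ∀ z : ∀ i, V i, (∀ i, z i ∈ P i) → z k = x k → 0 < d z →
      d (update z k y) = d z + 1 → d z ≤ d x) :
    IsLocalMaxIn G d P x := by
  obtain ⟨-, -, -, hd, huniq, hcomb⟩ := hB
  intro i w hw hwP
  by_contra! hlt
  have hup : d (update x i w) = d x + 1 := by rcases hd x i w hw with h | h <;> omega
  rcases eq_or_ne i k with rfl | hik
  · obtain rfl := huniq x i hpos w y hw hy hup hinc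
    exact hyP (by simpa using hwP i)
  · have hcomb' := hcomb x i k hik w y hw hy hup hinc
    have := hle _ hwP (update_of_ne (Ne.symm hik) ..) (by omega) (by omega)
    omega

lemma IsLocalMaxIn.update_update_ne_two (hB : InK n V G d)
    (hP : ∀ i, ((G i).induce (P i)).Connected) {x : ∀ i, V i} (hx : ∀ i, x i ∈ P i)
    (hmax : IsLocalMaxIn G d P x) {u : ∀ i, V i} (hu : ∀ i, u i ∈ P i) (hu0 : d u = 0)
    {k : Fin n} {y : V k} (hy : (G k).Adj (u k) y)
    {j : Fin n} (hjk : j ≠ k) {w : V j} (hwP : w ∈ P j) (hw : (G j).Adj (u j) w)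
    (hwd : (G j).dist (x j) w + 1 = (G j).dist (x j) (u j))
    (hgeo : Geodesic G d x (update u j w))
    {i : Fin n} (hik : i ≠ k) {v : V i} (hvP : v ∈ P i) (hv : (G i).Adj (u i) v)
    (hvd : (G i).dist (x i) (u i) + 1 = (G i).dist (x i) v) :
    d (update (update u i v) k y) ≠ 2 := by
  obtain ⟨-, -, -, hd, huniq, hcomb⟩ := id hB
  intro hv2
  have hw1 : d (update u j w) = 1 := by rcases hd u j w hw with h | h <;> omega
  have hy1 : d (update u k y) = 1 := by rcases hd u k y hy with h | h <;> omega
  have hwy2 := hcomb u j k hjk w y hw hy (by omega) (by omega)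
  -- at `u[k := y]`, of codistance `1`, both `v` and `w` are increasing neighbours
  have htv : d (update (update u k y) i v) = d (update u k y) + 1 := by
    rw [update_comm (Ne.symm hik)]; omega
  have htw : d (update (update u k y) j w) = d (update u k y) + 1 := by
    rw [update_comm (Ne.symm hjk)]; omega
  have hv' : (G i).Adj (update u k y i) v := by rwa [update_of_ne hik]
  have hw' : (G j).Adj (update u k y j) w := by rwa [update_of_ne hjk]
  rcases eq_or_ne i j with rfl | hij
  · obtain rfl := huniq _ i (by omega) v w hv' hw' htv htw
    omega
  · have h3 := hcomb _ i j hij v w hv' hw' htv htw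
    rw [update_comm (Ne.symm hik), update_comm hjk.symm, update_comm hij] at h3
    have hdown := hmax.add_one_eq_of_geodesic hB hP hx (update_mem_of_mem hu hwP) hgeo
      (by omega) hvP (by rwa [update_of_ne hij]) (by rwa [update_of_ne hij])
    have := hd (update (update u j w) i v) k y
      (by rwa [update_of_ne hik.symm, update_of_ne hjk.symm])
    omega

lemma IsLocalMaxIn.geodesic_of_update_increases (hB : InK n V G d)
    (hP : ∀ i, ((G i).induce (P i)).Connected) {x : ∀ i, V i} (hx : ∀ i, x i ∈ P i)
    (hmax : IsLocalMaxIn G d P x) (hxpos : 0 < d x) {k : Fin n} {y : V k}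
    (hy : (G k).Adj (x k) y) {z : ∀ i, V i} (hz : ∀ i, z i ∈ P i) (hzk : z k = x k)
    (hpos : 0 < d z) (hinc : d (update z k y) = d z + 1) : Geodesic G d x z := by
  obtain ⟨-, hT, -, hd, -, hcomb⟩ := id hB
  have hyk {t : ∀ i, V i} (ht : t k = x k) : (G k).Adj (t k) y := ht ▸ hy
  induction hm : tupleDist G x z using Nat.strong_induction_on generalizing z with
  | _ m ih =>
  by_cases hxz : x = z
  · subst hxz
    show d x + tupleDist G x x = d x
    rw [tupleDist_self, add_zero]
  obtain ⟨i, w, hwP, hw, hwd⟩ := exists_coord_adj_mem_dist_add_one_eq hT hP hx hz hxz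
  have hik := ne_of_dist_add_one_eq hzk hwd
  have hz₁ := update_mem_of_mem hz hwP
  have hz₁k : update z i w k = x k := by rwa [update_of_ne hik.symm]
  have hsum := tupleDist_update_add (G := G) x z i w
  rcases hd z i w hw with hup | hdown
  · have hcomb' := hcomb z i k hik w y hw (hyk hzk) hup hinc
    have hgeo₁ : d (update z i w) + tupleDist G x (update z i w) = d x :=
      ih _ (by omega) hz₁ hz₁k (by omega) (by omega) rfl
    show d z + tupleDist G x z = d x
    omega
  exfalso
  have hinc₁ := ChangesByOne.increases_of_decreases hd hik hw (hyk hzk) hdown hinc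
  have hback : (G i).Adj (update z i w i) (z i) := by rw [update_self]; exact hw.symm
  have hvd : (G i).dist (x i) (update z i w i) + 1 = (G i).dist (x i) (z i) := by
    rwa [update_self]
  rcases Nat.eq_zero_or_pos (d (update z i w)) with h0 | h0
  · -- step once more towards `x`, to a tuple that is geodesic by induction
    have hxz₁ : x ≠ update z i w := by rintro h; rw [← h] at h0; omega
    obtain ⟨j, w', hw'P, hw', hw'd⟩ :=
      exists_coord_adj_mem_dist_add_one_eq hT hP hx hz₁ hxz₁
    have hjk := ne_of_dist_add_one_eq hz₁k hw'd
    have hup₂ : d (update (update z i w) j w') = 1 := by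
      rcases hd _ j w' hw' with h | h <;> omega
    have hcomb' := hcomb _ j k hjk w' y hw' (hyk hz₁k) (by omega) hinc₁
    have hsum₂ := tupleDist_update_add (G := G) x (update z i w) j w'
    have hgeo₂ := ih _ (by omega) (update_mem_of_mem hz₁ hw'P)
      (by rwa [update_of_ne hjk.symm]) (by omega) (by omega) rfl
    have := hmax.update_update_ne_two hB hP hx hz₁ h0 (hyk hz₁k) hjk hw'P hw' hw'd hgeo₂
      hik (hz i) hback hvd
    rw [update_idem, update_eq_self] at this
    omega
  · have hgeo₁ := ih _ (by omega) hz₁ hz₁k h0 hinc₁ rfl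
    have := hmax.add_one_eq_of_geodesic hB hP hx hz₁ hgeo₁ h0 (hz i) hback hvd
    rw [update_idem, update_eq_self] at this
    omega

lemma goodStep_update_insert (hB : InK n V G d) (hP : ∀ i, ((G i).induce (P i)).Connected)
    {k : Fin n} {xk y : V k} (hxk : xk ∈ P k) (hyP : y ∉ P k) (hy : (G k).Adj xk y) :
    GoodStep G d P (update P k (insert y (P k))) := by
  obtain ⟨hfin, hT, -, hd, -, -⟩ := id hB
  have hG i := (hT i).connected
  have hyk {t : ∀ i, V i} (ht : t k = xk) : (G k).Adj (t k) y := ht ▸ hy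
  refine ⟨k, y, xk, hyP, hxk, hy, update_self .., fun i hi => update_of_ne hi .., ?_, ?_⟩
  · rintro z hz hyz
    rw [update_self] at hz
    rcases hz with rfl | hz
    · exact absurd hyz (SimpleGraph.irrefl _)
    · exact (hT k).isAcyclic.eq_of_adj_of_notMem (hP k) hyP hz hxk hyz hy.symm
  let S := {z : ∀ i, V i |
    (∀ i, z i ∈ P i) ∧ z k = xk ∧ 0 < d z ∧ d (update z k y) = d z + 1}
  by_cases hS : S.Nonempty
  · right
    obtain ⟨x, ⟨hx, hxk, hxpos, hxinc⟩, hxmax⟩ := S.exists_max_image d S.toFinite hS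
    have hmax : IsLocalMaxIn G d P x :=
      isLocalMaxIn_of_maximal_increasing hB hyP (hyk hxk) hxpos hxinc
        fun z hz hzk hzpos hzinc => hxmax z ⟨hz, hzk.trans hxk, hzpos, hzinc⟩
    refine ⟨x, hx, hxk, hmax, fun z hz hzk => ⟨fun hgeo => ?_, fun hngeo => ?_⟩⟩
    · exact hgeo.update_increases hd hG (hxk.trans hzk.symm) (hyk hzk) hxinc
    · refine (ChangesByOne.increases_or_eq_abs_sub_one hd (hyk hzk)).resolve_left ?_
      rintro ⟨hzpos, hzinc⟩
      exact hngeo (hmax.geodesic_of_update_increases hB hP hx hxpos (hyk hxk) hz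
        (hzk.trans hxk.symm) hzpos hzinc)
  · left
    intro z hz hzk
    refine (ChangesByOne.increases_or_eq_abs_sub_one hd (hyk hzk)).resolve_left ?_
    rintro ⟨hzpos, hzinc⟩
    exact hS ⟨z, hz, hzk, hzpos, hzinc⟩

def ReachesUnivByGoodSteps (G : ∀ i, SimpleGraph (V i)) (d : (∀ i, V i) → ℕ)
    (R : ∀ i, Set (V i)) : Prop :=
  ∃ (m : ℕ) (Q : ℕ → ∀ i, Set (V i)), Q 0 = R ∧ (∀ i, Q m i = Set.univ) ∧
    ∀ t < m, GoodStep G d (Q t) (Q (t + 1))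

lemma GoodStep.reachesUnivByGoodSteps {R R' : ∀ i, Set (V i)} (h : GoodStep G d R R')
    (h' : ReachesUnivByGoodSteps G d R') : ReachesUnivByGoodSteps G d R := by
  obtain ⟨m, Q, hQ0, hQm, hQ⟩ := h'
  refine ⟨m + 1, fun | 0 => R | t + 1 => Q t, rfl, hQm, ?_⟩
  rintro (_ | t) ht
  · rwa [← hQ0] at h
  · exact hQ t (by omega)

lemma reachesUnivByGoodSteps_of_connected (hB : InK n V G d) (R : ∀ i, Set (V i))
    (hR : ∀ i, ((G i).induce (R i)).Connected) : ReachesUnivByGoodSteps G d R := by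
  have := hB.1
  induction R using WellFoundedGT.induction with
  | _ R ih =>
  by_cases hU : ∀ i, R i = Set.univ
  · exact ⟨0, fun _ => R, rfl, hU, by simp⟩
  obtain ⟨k, hk⟩ := not_forall.1 hU
  obtain ⟨⟨x, hx⟩⟩ := (hR k).nonempty
  obtain ⟨y, hy⟩ := (Set.ne_univ_iff_exists_notMem _).1 hk
  obtain ⟨⟨⟨a, b⟩, hab⟩, -, ha, hb⟩ :=
    ((hB.2.1 k).connected x y).some.exists_boundary_dart _ hx hy
  refine (goodStep_update_insert hB hR ha hb hab).reachesUnivByGoodSteps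
    (ih _ (lt_update_self_iff.2 (Set.ssubset_insert hb)) fun i => ?_)
  rcases eq_or_ne i k with rfl | hik
  · rw [update_self]; exact connected_induce_insert (hR i) ha hab
  · rw [update_of_ne hik]; exact hR i

end Codistance

/-- Corollary: if `A ⊆ B` are both in `K_n` (with `B` finite), then `B` arises from `A`
by a finite sequence of elementary good extensions. -/
theorem stmt10 {n : ℕ} (V : Fin n → Type) (G : ∀ i, SimpleGraph (V i))
    (d : (∀ i, V i) → ℕ) (P : ∀ i, Set (V i))
    (hA : InK n (fun i => ↥(P i)) (fun i => (G i).induce (P i))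
      (fun x => d (fun i => (x i : V i))))
    (hB : InK n V G d) :
    ∃ (m : ℕ) (Q : ℕ → ∀ i, Set (V i)), Q 0 = P ∧ (∀ i, Q m i = Set.univ) ∧
      ∀ t < m, GoodStep G d (Q t) (Q (t + 1)) :=
  reachesUnivByGoodSteps_of_connected hB P fun i => (hA.2.1 i).connected
end

section
/- Let (A, d*) ∈ K_n with d* locally maximal at (x_1,...,x_n), and perform the type-2 elementary good extension attaching y to x_k. Then for any tuple ā with a_k = y and any coordinate i ≠ k, if the codistance at ā (with y) exceeds the codistance at ā with x_k in place of y, then there is at most one neighbour b of a_i raising the codistance of ā, and it lies on the geodesic from a_i toward x_i. -/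
open SimpleGraph

/-!
Since `d` changes by at most one along an edge, walking from `ā` to `x̄` one coordinate at a
time gives `d x̄ ≤ d ā + Σ_j dist(x_j, a_j)`. Let `b` be a neighbour of `a_i` with
`d ā + 1 < d(ā[k := y][i := b])`. As `d(ā[i := b]) ≤ d ā + 1`, the value `|d(ā[i := b]) - 1|`
is too small, so the extension rule forces `ā[i := b]` to be geodesic with `x̄` and
`d(ā[i := b]) = d ā + 1`; compared with the bound above, this makes `b` one step closer to `x_i`
than `a_i`. In a tree at most one neighbour of `a_i` is closer to `x_i`.
-/

open Function

theorem Finset.sum_apply_update_add {ι M : Type*} [Fintype ι] [DecidableEq ι] [AddCommMonoid M]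
    {V : ι → Type*} (g : ∀ i, V i → M) (z : ∀ i, V i) (i : ι) (c : V i) :
    ∑ j, g j (update z i c j) + g i (z i) = ∑ j, g j (z j) + g i c := by
  simp_rw [apply_update g, Finset.sum_update_of_mem (Finset.mem_univ i),
    Finset.sdiff_singleton_eq_erase, ← Finset.add_sum_erase _ _ (Finset.mem_univ i)]
  abel

namespace SimpleGraph

variable {W : Type*} {G : SimpleGraph W}

theorem exists_adj_dist_add_one_eq {u w : W} (h : G.dist u w ≠ 0) :
    ∃ c, G.Adj u c ∧ G.dist c w + 1 = G.dist u w := by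
  obtain ⟨p, hp⟩ := exists_walk_of_dist_ne_zero h
  cases p with
  | nil => simp at h
  | @cons _ c _ hc q =>
    refine ⟨c, hc, ?_⟩
    have hcw : G.dist c w ≤ q.length := dist_le q
    have huw : G.dist u w ≤ G.dist c w + 1 := by
      have := q.reachable.dist_triangle_right u
      rw [dist_eq_one_iff_adj.mpr hc] at this
      omega
    rw [Walk.length_cons] at hp
    omega

theorem IsTree.eq_of_adj_of_dist_add_one_eq (hG : G.IsTree) {u w b c : W} (hb : G.Adj u b)
    (hc : G.Adj u c) (hbw : G.dist b w + 1 = G.dist u w) (hcw : G.dist c w + 1 = G.dist u w) :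
    b = c := by
  obtain ⟨p, -, hp⟩ := (hG.connected b w).exists_path_of_dist
  obtain ⟨q, -, hq⟩ := (hG.connected c w).exists_path_of_dist
  have hbp : (Walk.cons hb p).IsPath := Walk.isPath_of_length_eq_dist _ (by simp [hp, hbw])
  have hcq : (Walk.cons hc q).IsPath := Walk.isPath_of_length_eq_dist _ (by simp [hq, hcw])
  simpa using congrArg (·.getVert 1) ((hG.existsUnique_path u w).unique hbp hcq)

end SimpleGraph

theorem le_add_sum_dist_of_update_le_add_one {ι : Type*} [Fintype ι] [DecidableEq ι]
    {V : ι → Type*} {G : ∀ i, SimpleGraph (V i)} {f : (∀ i, V i) → ℕ}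
    (hf : ∀ z i b, (G i).Adj (z i) b → f (update z i b) ≤ f z + 1) (x z : ∀ i, V i)
    (hz : ∀ i, (G i).Reachable (z i) (x i)) :
    f x ≤ f z + ∑ i, (G i).dist (x i) (z i) := by
  induction hN : ∑ i, (G i).dist (x i) (z i) generalizing z with
  | zero =>
    have : z = x := funext fun i => (hz i).dist_eq_zero_iff.mp <| by
      rw [SimpleGraph.dist_comm]; exact Finset.sum_eq_zero_iff.mp hN i (Finset.mem_univ i)
    subst this
    omega
  | succ N ih =>
    obtain ⟨j, -, hj⟩ := Finset.exists_ne_zero_of_sum_ne_zero (hN.trans_ne N.add_one_ne_zero)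
    obtain ⟨c, hc, hcx⟩ := exists_adj_dist_add_one_eq (SimpleGraph.dist_comm.trans_ne hj)
    have hreach : ∀ i, (G i).Reachable (update z j c i) (x i) :=
      (forall_update_iff z fun i v => (G i).Reachable v (x i)).mpr
        ⟨hc.symm.reachable.trans (hz j), fun i _ => hz i⟩
    have hsum := Finset.sum_apply_update_add (fun i v => (G i).dist (x i) v) z j c
    have hcx' : (G j).dist (x j) c + 1 = (G j).dist (x j) (z j) := by
      rwa [SimpleGraph.dist_comm, SimpleGraph.dist_comm (u := x j)]
    have := ih (update z j c) hreach (by omega)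
    have := hf z j c hc
    omega

section TypeTwoExtension

variable {n : ℕ} {V : Fin n → Type} {G : ∀ i, SimpleGraph (V i)} {d : (∀ i, V i) → ℕ}
  {k : Fin n} {P : ∀ i, Set (V i)}

theorem InK.update_le_add_one
    (hA : InK n (fun i => ↥(P i)) (fun i => (G i).induce (P i))
      (fun x => d (fun i => (x i : V i))))
    {z : ∀ i, V i} (hz : ∀ j, z j ∈ P j) {i : Fin n} {b : V i} (hb : b ∈ P i)
    (hadj : (G i).Adj (z i) b) :
    d (update z i b) ≤ d z + 1 := by
  have hcoe : (fun j => ((update (fun j => (⟨z j, hz j⟩ : P j)) i ⟨b, hb⟩ j : V j)))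
      = update z i b := by
    funext j
    rcases eq_or_ne j i with rfl | hne <;> simp [*]
  have h : d (update z i b) = d z + 1 ∨ d (update z i b) + 1 = d z := by
    rw [← hcoe]
    exact hA.2.2.2.1 (fun j => ⟨z j, hz j⟩) i ⟨b, hb⟩ hadj
  omega

theorem InK.isTree_of_ne (hP : ∀ i, i ≠ k → P i = Set.univ)
    (hA : InK n (fun i => ↥(P i)) (fun i => (G i).induce (P i))
      (fun x => d (fun i => (x i : V i))))
    {i : Fin n} (hik : i ≠ k) : (G i).IsTree := by
  have h : ((G i).induce (P i)).IsTree := hA.2.1 i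
  rw [hP i hik] at h
  exact (G i).induceUnivIso.isTree_iff.mp h

theorem InK.le_add_sum_dist (hP : ∀ i, i ≠ k → P i = Set.univ)
    (hA : InK n (fun i => ↥(P i)) (fun i => (G i).induce (P i))
      (fun x => d (fun i => (x i : V i))))
    {x z : ∀ i, V i} (hzk : z k ∈ P k) (hxz : x k = z k) :
    d x ≤ d z + ∑ i, (G i).dist (x i) (z i) := by
  -- freezing the `k`-th coordinate at `z k` extends the one-step bound to all tuples
  have hf : ∀ w i b, (G i).Adj (w i) b →
      d (update (update w i b) k (z k)) ≤ d (update w k (z k)) + 1 := by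
    intro w i b hadj
    rcases eq_or_ne i k with rfl | hik
    · simp
    rw [update_comm hik]
    refine hA.update_le_add_one (fun j => ?_) (hP i hik ▸ Set.mem_univ b)
      (by simpa [update_of_ne hik] using hadj)
    rcases eq_or_ne j k with rfl | hjk
    · simpa using hzk
    · simp [update_of_ne hjk, hP j hjk]
  have hreach : ∀ i, (G i).Reachable (z i) (x i) := by
    intro i
    rcases eq_or_ne i k with rfl | hik
    · rw [hxz]
    · exact (hA.isTree_of_ne hP hik).connected _ _
  have h := le_add_sum_dist_of_update_le_add_one (f := fun w => d (update w k (z k))) hf x z hreach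
  rwa [update_eq_self, ← hxz, update_eq_self] at h

theorem InK.dist_add_one_eq_of_lt_update_update (hP : ∀ i, i ≠ k → P i = Set.univ)
    (hA : InK n (fun i => ↥(P i)) (fun i => (G i).induce (P i))
      (fun x => d (fun i => (x i : V i))))
    {y xk : V k} {x : ∀ i, V i} (hxk : x k = xk)
    (hrule : ∀ z : ∀ i, V i, (∀ j, z j ∈ P j) → z k = xk →
      (Geodesic G d x z → d (update z k y) = d z + 1) ∧
      (¬ Geodesic G d x z → (d (update z k y) : ℤ) = |(d z : ℤ) - 1|))
    {a : ∀ i, V i} (ha : ∀ j, a j ∈ P j) (hak : a k = xk) {i : Fin n} (hik : i ≠ k)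
    {b : V i} (hb : (G i).Adj (a i) b) (hlt : d a + 1 < d (update (update a k y) i b)) :
    (G i).dist b (x i) + 1 = (G i).dist (a i) (x i) := by
  rw [update_comm hik.symm] at hlt
  have hsum := Finset.sum_apply_update_add (fun j v => (G j).dist (x j) v) a i b
  have hbP : b ∈ P i := hP i hik ▸ Set.mem_univ b
  set a' := update a i b
  have ha' : ∀ j, a' j ∈ P j :=
    (forall_update_iff a fun j v => v ∈ P j).mpr ⟨hbP, fun j _ => ha j⟩
  have ha'k : a' k = xk := by simp [a', update_of_ne hik.symm, hak]
  have hstep : d a' ≤ d a + 1 := hA.update_le_add_one ha hbP hb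
  have hgeo : Geodesic G d x a' := by
    by_contra hgeo
    have := (hrule a' ha' ha'k).2 hgeo
    rcases abs_cases ((d a' : ℤ) - 1) with ⟨h, -⟩ | ⟨h, -⟩ <;> omega
  have hrise : d a + 1 ≤ d a' := by
    have := (hrule a' ha' ha'k).1 hgeo
    omega
  have hlip := hA.le_add_sum_dist hP (ha k) (hxk.trans hak.symm)
  have hadj := hb.diff_dist_adj (u := x i)
  rw [Geodesic] at hgeo
  rw [SimpleGraph.dist_comm, SimpleGraph.dist_comm (u := a i)]
  omega

end TypeTwoExtension

theorem stmt16_general {n : ℕ} (V : Fin n → Type) (G : ∀ i, SimpleGraph (V i))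
    (d : (∀ i, V i) → ℕ) (k : Fin n) (y xk : V k)
    (P : ∀ i, Set (V i))
    (hP1 : ∀ i, i ≠ k → P i = Set.univ)
    (hA : InK n (fun i => ↥(P i)) (fun i => (G i).induce (P i))
      (fun x => d (fun i => (x i : V i))))
    (x : ∀ i, V i) (hxk : x k = xk)
    (hrule : ∀ z : ∀ i, V i, (∀ j, z j ∈ P j) → z k = xk →
      (Geodesic G d x z → d (Function.update z k y) = d z + 1) ∧
      (¬ Geodesic G d x z → (d (Function.update z k y) : ℤ) = |(d z : ℤ) - 1|)) :
    ∀ a : ∀ i, V i, (∀ j, a j ∈ P j) → a k = xk →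
      d a < d (Function.update a k y) →
      ∀ i : Fin n, i ≠ k →
        (∀ b c : V i, (G i).Adj (a i) b → (G i).Adj (a i) c →
          d (Function.update a k y) < d (Function.update (Function.update a k y) i b) →
          d (Function.update a k y) < d (Function.update (Function.update a k y) i c) →
          b = c) ∧
        (∀ b : V i, (G i).Adj (a i) b →
          d (Function.update a k y) < d (Function.update (Function.update a k y) i b) →
          (G i).dist b (x i) + 1 = (G i).dist (a i) (x i)) := by
  intro a ha hak hlt i hik
  have htoward : ∀ b, (G i).Adj (a i) b →
      d (update a k y) < d (update (update a k y) i b) →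
      (G i).dist b (x i) + 1 = (G i).dist (a i) (x i) := fun b hb hgt =>
    hA.dist_add_one_eq_of_lt_update_update hP1 hxk hrule ha hak hik hb (by omega)
  exact ⟨fun b c hb hc hgb hgc => (hA.isTree_of_ne hP1 hik).eq_of_adj_of_dist_add_one_eq hb hc
    (htoward b hb hgb) (htoward c hc hgc), htoward⟩

/-- In the type-2 good extension attaching `y` to `x_k` at a locally maximal tuple `x̄`:
for a tuple `ā` with `a_k = y` whose codistance exceeds that of the tuple with `x_k`,
in each coordinate `i ≠ k` there is at most one neighbour `b` of `a_i` raising the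
codistance, and any such `b` lies on the geodesic from `a_i` toward `x_i`. -/
theorem stmt16 {n : ℕ} (V : Fin n → Type) (G : ∀ i, SimpleGraph (V i))
    (d : (∀ i, V i) → ℕ) (k : Fin n) (y xk : V k)
    (hleaf : ∀ z : V k, (G k).Adj y z ↔ z = xk)
    (P : ∀ i, Set (V i))
    (hP1 : ∀ i, i ≠ k → P i = Set.univ) (hP2 : P k = {y}ᶜ)
    (hA : InK n (fun i => ↥(P i)) (fun i => (G i).induce (P i))
      (fun x => d (fun i => (x i : V i))))
    (x : ∀ i, V i) (hx : ∀ i, x i ∈ P i) (hxk : x k = xk)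
    (hmax : ∀ (i : Fin n) (z : V i), (G i).Adj (x i) z →
      (∀ j, Function.update x i z j ∈ P j) → d (Function.update x i z) ≤ d x)
    (hrule : ∀ z : ∀ i, V i, (∀ j, z j ∈ P j) → z k = xk →
      (Geodesic G d x z → d (Function.update z k y) = d z + 1) ∧
      (¬ Geodesic G d x z → (d (Function.update z k y) : ℤ) = |(d z : ℤ) - 1|)) :
    ∀ a : ∀ i, V i, (∀ j, a j ∈ P j) → a k = xk →
      d a < d (Function.update a k y) →
      ∀ i : Fin n, i ≠ k →
        (∀ b c : V i, (G i).Adj (a i) b → (G i).Adj (a i) c →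
          d (Function.update a k y) < d (Function.update (Function.update a k y) i b) →
          d (Function.update a k y) < d (Function.update (Function.update a k y) i c) →
          b = c) ∧
        (∀ b : V i, (G i).Adj (a i) b →
          d (Function.update a k y) < d (Function.update (Function.update a k y) i b) →
          (G i).dist b (x i) + 1 = (G i).dist (a i) (x i)) :=
  stmt16_general V G d k y xk P hP1 hA x hxk hrule
end

section
/- Let (A, d*) ∈ K_n and let x̄, ȳ be geodesic tuples. Then for each coordinate j and each vertex a on the geodesic path in A_j from y_j to x_j, the tuple obtained from ȳ by replacing y_j with a is geodesic with x̄, and the tuple obtained from x̄ by replacing x_j with a is geodesic with ȳ. -/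
open SimpleGraph

/-!
Axiom (2) of `K_n` makes `d*` 1-Lipschitz for the `ℓ¹` sum of the tree
metrics, `d*(v) ≤ d*(u) + Σ_i dist(v_i, u_i)`. If `z̄` lies coordinatewise between `x̄` and `ȳ`,
chaining this bound through `z̄` gives `d*(x̄) ≤ d*(z̄) + Σ dist(x_i, z_i) ≤ d*(ȳ) + Σ dist(x_i, y_i)`,
and geodesicity of `x̄, ȳ` forces equality in both steps.
-/

theorem OnPath.symm {V : Type} {G : SimpleGraph V} {u a w : V} (h : OnPath G u a w) :
    OnPath G w a u := by
  unfold OnPath at *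
  rw [dist_comm (u := w), dist_comm (u := a) (v := u), dist_comm (u := w)]
  omega

theorem onPath_left {V : Type} (G : SimpleGraph V) (u w : V) : OnPath G u u w := by
  simp [OnPath]

theorem onPath_right {V : Type} (G : SimpleGraph V) (u w : V) : OnPath G u w w := by
  simp [OnPath]

section Lipschitz

variable {ι : Type*} [DecidableEq ι] {V : ι → Type*} {G : ∀ i, SimpleGraph (V i)}
  {d : (∀ i, V i) → ℕ}
  (hstep : ∀ (x : ∀ i, V i) (i : ι) (y : V i), (G i).Adj (x i) y →
    d (Function.update x i y) ≤ d x + 1)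
include hstep

theorem le_update_add_length (u : ∀ i, V i) (i : ι) {c b : V i} (p : (G i).Walk c b) :
    d (Function.update u i c) ≤ d (Function.update u i b) + p.length := by
  induction p with
  | nil => simp
  | @cons c v b hcv p ih =>
    have hstep_cv := hstep (Function.update u i v) i c (by simpa using hcv.symm)
    rw [Function.update_idem] at hstep_cv
    rw [Walk.length_cons]
    omega

theorem le_add_dist_update (hconn : ∀ i, (G i).Preconnected) (u : ∀ i, V i) (i : ι) (b : V i) :
    d (Function.update u i b) ≤ d u + (G i).dist b (u i) := by
  obtain ⟨p, hp⟩ := (hconn i b (u i)).exists_walk_length_eq_dist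
  simpa [hp] using le_update_add_length hstep u i p

theorem le_add_sum_dist [Fintype ι] (hconn : ∀ i, (G i).Preconnected) (u v : ∀ i, V i) :
    d v ≤ d u + ∑ i, (G i).dist (v i) (u i) := by
  suffices h : ∀ s : Finset ι, d (s.piecewise v u) ≤ d u + ∑ i ∈ s, (G i).dist (v i) (u i) by
    simpa using h Finset.univ
  intro s
  induction s using Finset.induction_on with
  | empty => simp
  | @insert i s hi ih =>
    have hupd := le_add_dist_update hstep hconn (s.piecewise v u) i (v i)
    rw [Finset.piecewise_eq_of_notMem _ _ _ hi] at hupd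
    rw [Finset.piecewise_insert, Finset.sum_insert hi]
    omega

end Lipschitz

theorem geodesic_of_forall_onPath {n : ℕ} {V : Fin n → Type} {G : ∀ i, SimpleGraph (V i)}
    {d : (∀ i, V i) → ℕ}
    (hstep : ∀ (x : ∀ i, V i) (i : Fin n) (y : V i), (G i).Adj (x i) y →
      d (Function.update x i y) ≤ d x + 1)
    (hconn : ∀ i, (G i).Preconnected) {x y z : ∀ i, V i} (hxy : Geodesic G d x y)
    (hz : ∀ i, OnPath (G i) (x i) (z i) (y i)) :
    Geodesic G d x z ∧ Geodesic G d z y := by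
  have hsplit : ∑ i, (G i).dist (x i) (z i) + ∑ i, (G i).dist (z i) (y i)
      = ∑ i, (G i).dist (x i) (y i) := by
    rw [← Finset.sum_add_distrib]
    exact Finset.sum_congr rfl fun i _ => hz i
  have hxz := le_add_sum_dist hstep hconn z x
  have hzy := le_add_sum_dist hstep hconn y z
  unfold Geodesic at *
  omega

theorem forall_onPath_update {n : ℕ} {V : Fin n → Type} {G : ∀ i, SimpleGraph (V i)}
    {x y z : ∀ i, V i} (hz : ∀ i, OnPath (G i) (x i) (z i) (y i)) {j : Fin n} {a : V j}
    (ha : OnPath (G j) (x j) a (y j)) (i : Fin n) :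
    OnPath (G i) (x i) (Function.update z j a i) (y i) := by
  rcases eq_or_ne i j with rfl | hij
  · simpa using ha
  · simpa [hij] using hz i

/-- If `x̄, ȳ` are geodesic and `a` lies on the geodesic path from `y_j` to `x_j`, then
`ȳ` with `a` in place of `y_j` is geodesic with `x̄`, and `x̄` with `a` in place of `x_j`
is geodesic with `ȳ`. -/
theorem stmt17 {n : ℕ} (V : Fin n → Type) (G : ∀ i, SimpleGraph (V i))
    (d : (∀ i, V i) → ℕ) (hK : InK n V G d)
    (x y : ∀ i, V i) (hgeo : Geodesic G d x y)
    (j : Fin n) (a : V j) (ha : OnPath (G j) (y j) a (x j)) :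
    Geodesic G d x (Function.update y j a) ∧
    Geodesic G d (Function.update x j a) y := by
  obtain ⟨-, htree, -, hpm, -, -⟩ := hK
  have hstep : ∀ (u : ∀ i, V i) (i : Fin n) (b : V i), (G i).Adj (u i) b →
      d (Function.update u i b) ≤ d u + 1 := fun u i b hb => by
    rcases hpm u i b hb with h | h <;> omega
  have hconn : ∀ i, (G i).Preconnected := fun i => (htree i).connected.preconnected
  have hya := forall_onPath_update (fun i => onPath_right (G i) (x i) (y i)) ha.symm
  have hxa := forall_onPath_update (fun i => onPath_left (G i) (x i) (y i)) ha.symm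
  exact ⟨(geodesic_of_forall_onPath hstep hconn hgeo hya).1,
    (geodesic_of_forall_onPath hstep hconn hgeo hxa).2⟩
end
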